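/- arXiv:2104.00834 — 5 statements merged into one kernel-verified Lean document; each statement's English description precedes it below -/
import Mathlib

section
/- Let I : [0,1] → ℝ be strictly concave and differentiable with I' decreasing, and define g(a, b) = ∫_a^b (x − q₀ − c) dx + I(b − a). If b₁ > b₂ and a₁, a₂ are the (unique) interior maximizers of g(·, b₁) and g(·, b₂) respectively, satisfying I'(bᵢ − aᵢ) = q₀ + c − aᵢ, then a₁ ≥ a₂. -/
theorem StrictAntiOn.le_of_apply_sub_eq_const_sub {f : ℝ → ℝ} {s : Set ℝ}
    (hf : StrictAntiOn f s) {k a₁ a₂ b₁ b₂ : ℝ} (hb : b₂ ≤ b₁)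
    (h₁ : b₁ - a₁ ∈ s) (h₂ : b₂ - a₂ ∈ s)
    (hfoc₁ : f (b₁ - a₁) = k - a₁) (hfoc₂ : f (b₂ - a₂) = k - a₂) : a₂ ≤ a₁ := by
  by_contra! h
  have := hf h₂ h₁ (by linarith)
  linarith

theorem club_lower_bound_monotone_general (q₀ c : ℝ) (hq₀ : q₀ ∈ Set.Ioo (0 : ℝ) 1)
    (I' : ℝ → ℝ)
    (hI' : StrictAntiOn I' (Set.Icc (0 : ℝ) 1))
    (b₁ b₂ a₁ a₂ : ℝ) (hb : b₁ > b₂) (hb₁ : b₁ ∈ Set.Ioc (0 : ℝ) q₀)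
    (hb₂ : b₂ ∈ Set.Ioc (0 : ℝ) q₀)
    (ha₁ : a₁ ∈ Set.Ioo (0 : ℝ) b₁) (ha₂ : a₂ ∈ Set.Ioo (0 : ℝ) b₂)
    (hfoc₁ : I' (b₁ - a₁) = q₀ + c - a₁)
    (hfoc₂ : I' (b₂ - a₂) = q₀ + c - a₂) :
    a₁ ≥ a₂ :=
  hI'.le_of_apply_sub_eq_const_sub hb.le
    ⟨by linarith [ha₁.2], by linarith [hb₁.2, hq₀.2, ha₁.1]⟩
    ⟨by linarith [ha₂.2], by linarith [hb₂.2, hq₀.2, ha₂.1]⟩ hfoc₁ hfoc₂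

/-- Monotone comparative statics (Proposition 2): let `I` be strictly concave and
differentiable with `I'` (strictly) decreasing, and
`g(a,b) = ∫ x in a..b, (x - q₀ - c) + I (b - a)`. If `b₁ > b₂` and `a₁, a₂` are the unique
interior maximizers of `g(·, b₁)` and `g(·, b₂)` respectively, satisfying the first-order
conditions `I'(bᵢ - aᵢ) = q₀ + c - aᵢ`, then `a₁ ≥ a₂`. -/
theorem club_lower_bound_monotone (q₀ c : ℝ) (hq₀ : q₀ ∈ Set.Ioo (0 : ℝ) 1) (hc : 0 < c)
    (I I' : ℝ → ℝ) (hI : ∀ x ∈ Set.Icc (0 : ℝ) 1, HasDerivAt I (I' x) x)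
    (hIconc : StrictConcaveOn ℝ (Set.Icc (0 : ℝ) 1) I)
    (hI' : StrictAntiOn I' (Set.Icc (0 : ℝ) 1))
    (b₁ b₂ a₁ a₂ : ℝ) (hb : b₁ > b₂) (hb₁ : b₁ ∈ Set.Ioc (0 : ℝ) q₀)
    (hb₂ : b₂ ∈ Set.Ioc (0 : ℝ) q₀)
    (ha₁ : a₁ ∈ Set.Ioo (0 : ℝ) b₁) (ha₂ : a₂ ∈ Set.Ioo (0 : ℝ) b₂)
    (hmax₁ : ∀ a ∈ Set.Icc (0 : ℝ) b₁,
      (∫ x in a..b₁, (x - q₀ - c)) + I (b₁ - a) ≤ (∫ x in a₁..b₁, (x - q₀ - c)) + I (b₁ - a₁))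
    (hmax₂ : ∀ a ∈ Set.Icc (0 : ℝ) b₂,
      (∫ x in a..b₂, (x - q₀ - c)) + I (b₂ - a) ≤ (∫ x in a₂..b₂, (x - q₀ - c)) + I (b₂ - a₂))
    (huniq₁ : ∀ a ∈ Set.Ioo (0 : ℝ) b₁, I' (b₁ - a) = q₀ + c - a → a = a₁)
    (huniq₂ : ∀ a ∈ Set.Ioo (0 : ℝ) b₂, I' (b₂ - a) = q₀ + c - a → a = a₂)
    (hfoc₁ : I' (b₁ - a₁) = q₀ + c - a₁)
    (hfoc₂ : I' (b₂ - a₂) = q₀ + c - a₂) :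
    a₁ ≥ a₂ :=
  club_lower_bound_monotone_general q₀ c hq₀ I' hI' b₁ b₂ a₁ a₂ hb hb₁ hb₂ ha₁ ha₂ hfoc₁ hfoc₂
end

section
/- In an equilibrium profile where each user α ≤ q₀ reciprocally follows exactly the users with abilities in an interval (q(α)̲, q̄(α)], if user α reciprocally follows a user of ability β < q₀ and does not reciprocally follow a user of ability γ with β < γ ≤ q₀, then α's strategy is not optimal: replacing β by γ strictly increases α's total utility. -/
open Finset

/-!
Swapping `β` for `γ` keeps the number of reciprocal followees (both abilities are `≤ q₀`), so the
monitoring cost and the attention utility `I` are unchanged, while consumption utility rises by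
`γ - β > 0`.
-/

namespace Finset

variable {α : Type*} [DecidableEq α] {s : Finset α} {a b : α}

theorem card_insert_erase_of_notMem (ha : a ∈ s) (hb : b ∉ s) : #(insert b (s.erase a)) = #s := by
  rw [card_insert_of_notMem fun h => hb (mem_of_mem_erase h), card_erase_add_one ha]

theorem card_filter_insert_erase (p : α → Prop) [DecidablePred p] (ha : a ∈ s) (hpa : p a)
    (hb : b ∉ s) (hpb : p b) : #((insert b (s.erase a)).filter p) = #(s.filter p) := by
  rw [filter_insert, if_pos hpb, filter_erase]
  exact card_insert_erase_of_notMem (mem_filter.2 ⟨ha, hpa⟩) fun h => hb (mem_of_mem_filter b h)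

theorem sum_insert_erase_of_notMem {M : Type*} [AddCommGroup M] (f : α → M) (ha : a ∈ s)
    (hb : b ∉ s) : ∑ x ∈ insert b (s.erase a), f x = ∑ x ∈ s, f x - f a + f b := by
  rw [sum_insert fun h => hb (mem_of_mem_erase h), sum_erase_eq_sub ha, add_comm]

end Finset

noncomputable def totalUtility (q₀ c : ℝ) (I : ℕ → ℝ) (G : Finset ℝ) : ℝ :=
  (∑ x ∈ G, (x - q₀)) - c * (#(G.filter (fun x => x ≤ q₀)) : ℝ) + I #(G.filter (fun x => x ≤ q₀))

theorem totalUtility_insert_erase (q₀ c : ℝ) (I : ℕ → ℝ) {F : Finset ℝ} {β γ : ℝ} (hβF : β ∈ F)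
    (hγF : γ ∉ F) (hβ : β ≤ q₀) (hγ : γ ≤ q₀) :
    totalUtility q₀ c I (insert γ (F.erase β)) = totalUtility q₀ c I F + (γ - β) := by
  unfold totalUtility
  rw [sum_insert_erase_of_notMem _ hβF hγF, card_filter_insert_erase _ hβF hβ hγF hγ]
  ring

/-- Exchange argument from the proof of Proposition 2. A user's total utility from a
(finite) set `F` of followees of given abilities is
`V F = Σ_{x ∈ F} (x - q₀) - c * #(reciprocal followees) + I (#reciprocal followees)`,
where followees of ability `≤ q₀` are the reciprocal ones. If the user reciprocally
follows a user of ability `β < q₀` but not a user of ability `γ` with `β < γ ≤ q₀`, her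
strategy is not optimal: replacing `β` by `γ` strictly increases her total utility. -/
theorem swap_reciprocal_improves (q₀ c : ℝ) (I : ℕ → ℝ)
    (F : Finset ℝ) (β γ : ℝ) (hβF : β ∈ F) (hγF : γ ∉ F)
    (hβ : β < q₀) (hβγ : β < γ) (hγ : γ ≤ q₀) :
    (fun G : Finset ℝ =>
        (∑ x ∈ G, (x - q₀)) - c * ((G.filter (fun x => x ≤ q₀)).card : ℝ) +
          I (G.filter (fun x => x ≤ q₀)).card)
      (insert γ (F.erase β)) >
    (fun G : Finset ℝ =>
        (∑ x ∈ G, (x - q₀)) - c * ((G.filter (fun x => x ≤ q₀)).card : ℝ) +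
          I (G.filter (fun x => x ≤ q₀)).card) F := by
  change totalUtility q₀ c I (insert γ (F.erase β)) > totalUtility q₀ c I F
  rw [totalUtility_insert_erase q₀ c I hβF hγF hβ.le hγ]
  linarith
end

section
/- If for some boundary α_i the maximum over a ∈ [0, α_i] of ∫_a^{α_i} (x − q₀ − c) dx + I(α_i − a) equals I(0) = 0 and is attained only at a = α_i, then no user of ability at most α_i engages in attention bartering: for every interval (a, b] ⊆ [0, α_i] with a < b, the club payoff ∫_a^b (x − q₀ − c) dx + I(b − a) is nonpositive. -/
/-! The integrand `x ↦ x - q₀ - c` is increasing and the term `I (b - a)` depends only on the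
length of the club, so sliding a club `(a, b]` to the right never lowers its payoff. Sliding
`(a, b] ⊆ [0, αᵢ]` until its right end hits `αᵢ` gives a club `(a', αᵢ]` with `a' ∈ [0, αᵢ]`,
whose payoff is nonpositive by the maximality assumption. -/

open intervalIntegral

theorem Monotone.intervalIntegral_le_intervalIntegral_add {f : ℝ → ℝ} (hf : Monotone f)
    {a b : ℝ} (hab : a ≤ b) {s : ℝ} (hs : 0 ≤ s) :
    ∫ x in a..b, f x ≤ ∫ x in a + s..b + s, f x := by
  rw [← integral_comp_add_right]
  exact integral_mono_on hab hf.intervalIntegrable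
    (hf.comp (monotone_id.add_const s)).intervalIntegrable
    fun _ _ => hf (le_add_of_nonneg_right hs)

noncomputable def clubPayoff (q₀ c : ℝ) (I : ℝ → ℝ) (a b : ℝ) : ℝ :=
  (∫ x in a..b, (x - q₀ - c)) + I (b - a)

theorem clubPayoff_le_clubPayoff_add (q₀ c : ℝ) (I : ℝ → ℝ) {a b : ℝ} (hab : a ≤ b) {s : ℝ}
    (hs : 0 ≤ s) : clubPayoff q₀ c I a b ≤ clubPayoff q₀ c I (a + s) (b + s) := by
  have hmono : Monotone fun x : ℝ => x - q₀ - c := fun x y hxy => by dsimp only; linarith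
  unfold clubPayoff
  rw [add_sub_add_right_eq_sub]
  gcongr
  exact hmono.intervalIntegral_le_intervalIntegral_add hab hs

theorem no_bartering_below_terminal_boundary_general (q₀ c : ℝ) (I : ℝ → ℝ)
    (αi : ℝ)
    (hmax : ∀ a ∈ Set.Icc (0 : ℝ) αi, (∫ x in a..αi, (x - q₀ - c)) + I (αi - a) ≤ 0) :
    ∀ a b : ℝ, 0 ≤ a → a < b → b ≤ αi →
      (∫ x in a..b, (x - q₀ - c)) + I (b - a) ≤ 0 := by
  intro a b ha hab hbα
  have hslide := clubPayoff_le_clubPayoff_add q₀ c I hab.le (sub_nonneg.mpr hbα)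
  rw [add_sub_cancel] at hslide
  exact hslide.trans (hmax _ ⟨by linarith, by linarith⟩)

/-- Termination of club formation (Proposition 3): if for some boundary `αᵢ ≤ q₀` the
maximum over `a ∈ [0, αᵢ]` of `∫ x in a..αᵢ, (x - q₀ - c) + I (αᵢ - a)` equals
`I 0 = 0` and is attained only at `a = αᵢ`, then no user of ability at most `αᵢ` engages
in attention bartering: every club `(a, b] ⊆ [0, αᵢ]` with `a < b` has nonpositive payoff. -/
theorem no_bartering_below_terminal_boundary (q₀ c : ℝ) (hq₀ : q₀ ∈ Set.Ioo (0 : ℝ) 1)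
    (hc : 0 < c) (I : ℝ → ℝ) (hImono : StrictMonoOn I (Set.Icc (0 : ℝ) 1))
    (hIconc : ConcaveOn ℝ (Set.Icc (0 : ℝ) 1) I) (hI0 : I 0 = 0)
    (αi : ℝ) (hαi : αi ∈ Set.Icc (0 : ℝ) q₀)
    (hmax : ∀ a ∈ Set.Icc (0 : ℝ) αi, (∫ x in a..αi, (x - q₀ - c)) + I (αi - a) ≤ 0)
    (honly : ∀ a ∈ Set.Icc (0 : ℝ) αi,
      (∫ x in a..αi, (x - q₀ - c)) + I (αi - a) = 0 → a = αi) :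
    ∀ a b : ℝ, 0 ≤ a → a < b → b ≤ αi →
      (∫ x in a..b, (x - q₀ - c)) + I (b - a) ≤ 0 :=
  no_bartering_below_terminal_boundary_general q₀ c I αi hmax
end

section
/- Suppose I(x) = √x/2 and the marginal non-bartering user has ability α satisfying the 'Marx condition' that she is indifferent to bartering with her own type: the derivative at zero club size of ε ↦ ∫_{α−ε}^{α}(x − q₀ − c)dx + I(ε) is infinite, hence for any α ∈ [0, q₀] and any c > 0 there exists ε > 0 such that the club (α − ε, α] has strictly positive payoff. Therefore with I(x) = √x/2 no positive-measure set of lurkers exists among users with positive ability. -/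
open Filter Topology

/-!
Over a club of size `ε` ending at `α` the integral is `ε (α - q₀ - c) - ε² / 2`, which is `O(ε)`,
while the attention term `√ε / 2` is not: `K ε < √ε` for every fixed `K` once `ε > 0` is small,
because `K ε = (K √ε) √ε` and `K √ε → 0`.
-/

theorem integral_sub_const_eq (a ε k : ℝ) :
    ∫ x in (a - ε)..a, (x - k) = ε * (a - k) - ε ^ 2 / 2 := by
  rw [intervalIntegral.integral_comp_sub_right (fun x => x), integral_id]
  ring

theorem eventually_mul_lt_sqrt (K : ℝ) : ∀ᶠ ε in 𝓝[>] (0 : ℝ), K * ε < √ε := by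
  have hlim : Tendsto (fun ε => K * √ε) (𝓝[>] (0 : ℝ)) (𝓝 0) := by
    simpa using (Real.continuous_sqrt.tendsto 0).const_mul K |>.mono_left nhdsWithin_le_nhds
  filter_upwards [hlim.eventually_lt_const one_pos, self_mem_nhdsWithin] with ε hK (hε : 0 < ε)
  calc K * ε = K * √ε * √ε := by rw [mul_assoc, Real.mul_self_sqrt hε.le]
    _ < 1 * √ε := by gcongr
    _ = √ε := one_mul _

theorem sqrt_attention_small_clubs_profitable_general (q₀ c : ℝ) :
    ∀ α ∈ Set.Icc (0 : ℝ) q₀, ∃ ε > (0 : ℝ),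
      (∫ x in (α - ε)..α, (x - q₀ - c)) + Real.sqrt ε / 2 > 0 := by
  intro α _
  obtain ⟨ε, ⟨hsqrt, hε1⟩, hε0⟩ :=
    ((eventually_mul_lt_sqrt (2 * (q₀ + c - α) + 1)).and
      (eventually_lt_nhds (zero_lt_one' ℝ) |>.filter_mono nhdsWithin_le_nhds)
      |>.and self_mem_nhdsWithin).exists
  refine ⟨ε, hε0, ?_⟩
  simp_rw [sub_sub _ q₀ c]
  rw [integral_sub_const_eq]
  -- `ε² ≤ ε` on `(0, 1)`, so the payoff is at least `(√ε - (2 (q₀ + c - α) + 1) ε) / 2`.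
  nlinarith [mul_lt_mul_of_pos_left hε1 hε0]

/-- With attention utility `I x = √x / 2`, whose derivative at zero club size is infinite,
small clubs always yield strictly positive payoff: for any `q₀ ∈ (0,1)`, any `c > 0`, and
any ability `α ∈ [0, q₀]`, there exists `ε > 0` such that the club `(α - ε, α]` has
strictly positive payoff `∫ x in (α-ε)..α, (x - q₀ - c) + √ε / 2 > 0`. Hence with
`I x = √x / 2` no positive-measure set of lurkers exists among users of positive ability. -/
theorem sqrt_attention_small_clubs_profitable (q₀ c : ℝ) (hq₀ : q₀ ∈ Set.Ioo (0 : ℝ) 1)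
    (hc : 0 < c) :
    ∀ α ∈ Set.Icc (0 : ℝ) q₀, ∃ ε > (0 : ℝ),
      (∫ x in (α - ε)..α, (x - q₀ - c)) + Real.sqrt ε / 2 > 0 :=
  sqrt_attention_small_clubs_profitable_general q₀ c
end

section
/- Let I be strictly increasing with I(0) = 0, q₀ ∈ (0,1), c ≥ 0. If c ≥ I(q₀) + q₀ (so that even the best possible bartering deal is unprofitable), then for every interval (a, b] ⊆ [0, q₀] the club payoff ∫_a^b (x − q₀ − c) dx + I(b − a) ≤ 0, with equality only for a = b; hence no attention bartering occurs in equilibrium. -/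
open intervalIntegral

theorem integral_id_sub_const (a b q : ℝ) :
    ∫ x in a..b, (x - q) = (b - a) * ((a + b) / 2 - q) := by
  rw [integral_sub intervalIntegrable_id intervalIntegrable_const, integral_id,
    integral_const, smul_eq_mul]
  ring

theorem integral_id_sub_const_neg {a b q : ℝ} (hab : a < b) (hbq : b ≤ q) :
    ∫ x in a..b, (x - q) < 0 := by
  rw [integral_id_sub_const]
  exact mul_neg_of_pos_of_neg (by linarith) (by linarith)

theorem club_payoff_neg {I : ℝ → ℝ} {a b q₀ c : ℝ} (hab : a < b) (hbq : b ≤ q₀)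
    (hcost : I (b - a) ≤ c * (b - a)) :
    (∫ x in a..b, (x - q₀ - c)) + I (b - a) < 0 := by
  have hsplit : ∫ x in a..b, (x - q₀ - c) = (∫ x in a..b, (x - q₀)) - c * (b - a) := by
    rw [integral_sub (intervalIntegrable_id.sub intervalIntegrable_const) intervalIntegrable_const,
      integral_const, smul_eq_mul, mul_comm]
  linarith [integral_id_sub_const_neg hab hbq]

theorem no_bartering_when_monitoring_costly_general (q₀ c : ℝ) (I : ℝ → ℝ) (hI0 : I 0 = 0)
    (hcost : ∀ s ∈ Set.Ioc (0 : ℝ) q₀, I s / s ≤ c) :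
    ∀ a b : ℝ, 0 ≤ a → a ≤ b → b ≤ q₀ →
      ((∫ x in a..b, (x - q₀ - c)) + I (b - a) ≤ 0 ∧
        ((∫ x in a..b, (x - q₀ - c)) + I (b - a) = 0 → a = b)) := by
  intro a b ha hab hbq
  rcases hab.eq_or_lt with rfl | hab
  · simp [hI0]
  have hs : 0 < b - a := sub_pos.mpr hab
  have hIle : I (b - a) ≤ c * (b - a) :=
    (div_le_iff₀ hs).mp (hcost (b - a) ⟨hs, by linarith⟩)
  have hneg := club_payoff_neg hab hbq hIle
  exact ⟨hneg.le, fun h => absurd h hneg.ne⟩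

/-- The 'monitoring cost so large that no bartering occurs' regime of Section 3.3: let `I`
be strictly increasing with `I 0 = 0`, `q₀ ∈ (0,1)`, `c ≥ 0`, and suppose `I s / s ≤ c`
for every club size `s ∈ (0, q₀]` (even the best possible bartering deal is unprofitable).
Then every club `(a, b] ⊆ [0, q₀]` has nonpositive payoff
`∫ x in a..b, (x - q₀ - c) + I (b - a) ≤ 0`, with equality only when `a = b`; hence no
attention bartering occurs in equilibrium. -/
theorem no_bartering_when_monitoring_costly (q₀ c : ℝ) (hq₀ : q₀ ∈ Set.Ioo (0 : ℝ) 1)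
    (hc : 0 ≤ c) (I : ℝ → ℝ) (hImono : StrictMonoOn I (Set.Icc (0 : ℝ) 1)) (hI0 : I 0 = 0)
    (hcost : ∀ s ∈ Set.Ioc (0 : ℝ) q₀, I s / s ≤ c) :
    ∀ a b : ℝ, 0 ≤ a → a ≤ b → b ≤ q₀ →
      ((∫ x in a..b, (x - q₀ - c)) + I (b - a) ≤ 0 ∧
        ((∫ x in a..b, (x - q₀ - c)) + I (b - a) = 0 → a = b)) :=
  no_bartering_when_monitoring_costly_general q₀ c I hI0 hcost
end
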